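/- Let $U,V$ be vector spaces over an algebraically closed field with $\dim U = r$ and $\dim V = s \geq 1$, and let $W \subseteq \mathrm{Hom}(U,V)$ be a $t$-dimensional subspace such that for every nonzero $u \in U$ the evaluation map $f \mapsto f(u)$ from $W$ to $V$ is surjective. Then for any hyperplane $B \subseteq U$ (with $B \neq 0$), the subspace $\{f \in W : f|_B = 0\}$ has dimension at most $t - r - s + 2$. -/

import Mathlib

/-!
Restricting `W` to `B` gives a space of maps `B → V`, of dimension `t - dim (W ⊓ vanishOn B)`,
in which evaluation at every nonzero `b` is surjective. Such a space has dimension at least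
`dim B + dim V - 1`: otherwise, in bases, it yields at most `dim B + dim V - 2` bilinear forms
on `K^(dim V) × K^(dim B)`, and over an algebraically closed field such a system has a common
zero `(y, x)` with `x, y ≠ 0`; then `y` is a functional killing `f x` for all `f ∈ W`.

The common zero is found by induction on the second dimension. If `c + 1` forms had no such
zero, then for every zero `(x, y)` of the first `c` forms over an extension field, `y` would be
proportional to a `K`-rational vector: otherwise some ratio of the last form value by `x i * y q`
is transcendental, and specialising at a place where it vanishes (and descending with the
Nullstellensatz) produces a common zero of all forms over `K`. But by induction the first `c`
forms have a zero over the algebraic closure of `K(T)` with `y` in the hyperplane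
`∑ i, T ^ i * y i = 0`, which contains no nonzero `K`-rational vector.
-/

open Module

/-- The subspace of linear maps vanishing on the subspace `B`. -/
def vanishOn {k U V : Type*} [Field k] [AddCommGroup U] [Module k U]
    [AddCommGroup V] [Module k V] (B : Submodule k U) :
    Submodule k (U →ₗ[k] V) where
  carrier := {f | ∀ x ∈ B, f x = 0}
  add_mem' := fun hf hg x hx => by simp [hf x hx, hg x hx]
  zero_mem' := fun x _ => by simp
  smul_mem' := fun c f hf x hx => by simp [hf x hx]

open Polynomial Matrix

theorem MvPolynomial.exists_eval_eq_zero_of_eval₂_eq_zero {K F σ : Type*} [Field K]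
    [IsAlgClosed K] [Finite σ] [CommRing F] [Nontrivial F] (φ : K →+* F)
    (S : Set (MvPolynomial σ K)) (v : σ → F) (hv : ∀ f ∈ S, eval₂ φ v f = 0) :
    ∃ z : σ → K, ∀ f ∈ S, eval z f = 0 := by
  have hS : Ideal.span S ≠ ⊤ := fun h ↦ by
    have : Ideal.span S ≤ RingHom.ker (eval₂Hom φ v) := Ideal.span_le.mpr hv
    simpa using this (h ▸ Submodule.mem_top : (1 : MvPolynomial σ K) ∈ Ideal.span S)
  obtain ⟨M, hM, hSM⟩ := Ideal.exists_le_maximal _ hS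
  obtain ⟨z, rfl⟩ := isMaximal_iff_eq_vanishingIdeal_singleton.mp hM
  exact ⟨z, fun f hf ↦ (mem_vanishingIdeal_singleton_iff z f).mp (hSM (Ideal.subset_span hf))⟩

theorem IsAlgClosed.mem_range_algebraMap_of_isAlgebraic {K F : Type*} [Field K] [IsAlgClosed K]
    [Field F] [Algebra K F] {u : F} (hu : IsAlgebraic K u) : u ∈ (algebraMap K F).range :=
  minpoly.mem_range_of_degree_eq_one K u <|
    IsAlgClosed.degree_eq_one_of_irreducible K (minpoly.irreducible hu.isIntegral)

theorem Transcendental.exists_valuationSubring_mem_nonunits {K F : Type*} [Field K] [Field F]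
    [Algebra K F] {u : F} (hu : Transcendental K u) :
    ∃ O : ValuationSubring F, (algebraMap K F).range ≤ O.toSubring ∧ u ∈ O.nonunits := by
  set A := (Algebra.adjoin K {u}).toSubring
  let u' : A := ⟨u, Algebra.self_mem_adjoin_singleton K u⟩
  have hu' : Ideal.span {u'} ≠ ⊤ := by
    rw [Ne, Ideal.span_singleton_eq_top]
    rintro ⟨⟨_, w, huw, -⟩, rfl⟩
    have hw : (w : F) ∈ Algebra.adjoin K {u} := w.2
    rw [Algebra.adjoin_singleton_eq_range_aeval] at hw
    obtain ⟨q, hq⟩ := hw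
    have : Polynomial.aeval u (X * q - 1) = 0 := by
      rw [map_sub, map_mul, aeval_X, map_one, sub_eq_zero]
      exact (congrArg (u * ·) hq).trans (congrArg Subtype.val huw)
    exact not_isUnit_X (.of_mul_eq_one q (sub_eq_zero.mp (transcendental_iff.mp hu _ this)))
  obtain ⟨O, hAO, hO⟩ := Ideal.image_subset_nonunits_valuationSubring _ hu'
  refine ⟨O, ?_, hO ⟨u', Ideal.mem_span_singleton_self u', rfl⟩⟩
  rintro _ ⟨a, rfl⟩
  exact hAO (Subalgebra.algebraMap_mem _ a)

theorem Transcendental.eq_zero_of_pow_dotProduct_eq_zero {K F : Type*} [Field K] [Field F]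
    [Algebra K F] {T : F} (hT : Transcendental K T) {s : ℕ} {η : Fin s → K}
    (h : (fun i : Fin s ↦ T ^ (i : ℕ)) ⬝ᵥ (algebraMap K F ∘ η) = 0) : η = 0 := by
  have hp : ∑ i : Fin s, C (η i) * X ^ (i : ℕ) = 0 := by
    refine transcendental_iff.mp hT _ ?_
    simpa only [map_sum, map_mul, aeval_C, map_pow, aeval_X, dotProduct, Function.comp_apply,
      mul_comm] using h
  ext i
  simpa [finsetSum_coeff, coeff_C_mul_X_pow, Fin.val_inj] using congrArg (coeff · i) hp

theorem ValuationSubring.exists_forall_valuation_le {F m : Type*} [Field F] [Finite m]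
    (O : ValuationSubring F) {x : m → F} (hx : x ≠ 0) :
    ∃ i, x i ≠ 0 ∧ ∀ p, O.valuation (x p) ≤ O.valuation (x i) := by
  obtain ⟨p₀, hp₀⟩ : ∃ p, x p ≠ 0 := Function.ne_iff.mp hx
  have : Nonempty m := ⟨p₀⟩
  obtain ⟨i, hi⟩ := Finite.exists_max fun p ↦ O.valuation (x p)
  exact ⟨i, O.valuation.pos_iff.mp ((O.valuation.pos_iff.mpr hp₀).trans_le (hi p₀)), hi⟩

theorem ValuationSubring.inv_mul_mem_of_valuation_le {F : Type*} [Field F] (O : ValuationSubring F)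
    {a b : F} (h : O.valuation b ≤ O.valuation a) : a⁻¹ * b ∈ O := by
  rw [← O.valuation_le_one_iff, map_mul, map_inv₀]
  rcases eq_or_ne (O.valuation a) 0 with ha | ha
  · simp_all
  · exact inv_mul_le_one_of_le₀ h zero_le

section

variable {R S : Type*} {m n : Type*} [Fintype m] [Fintype n]

theorem RingHom.map_dotProduct_mulVec [CommSemiring R] [CommSemiring S] (f : R →+* S)
    (x : m → R) (M : Matrix m n R) (y : n → R) :
    f (x ⬝ᵥ M *ᵥ y) = (f ∘ x) ⬝ᵥ M.map f *ᵥ (f ∘ y) := by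
  rw [RingHom.map_dotProduct]
  congr 1
  ext i
  exact f.map_mulVec M y i

theorem Matrix.smul_dotProduct_mulVec_smul [CommSemiring R] (a b : R) (x : m → R)
    (M : Matrix m n R) (y : n → R) : (a • x) ⬝ᵥ M *ᵥ (b • y) = a * b * (x ⬝ᵥ M *ᵥ y) := by
  rw [mulVec_smul, dotProduct_smul, smul_dotProduct, smul_eq_mul, smul_eq_mul, mul_left_comm,
    mul_assoc]

end

section

variable {K : Type*} [Field K] {ι m n : Type*} [Fintype m] [Fintype n]

def HasNontrivialCommonZero (N : ι → Matrix m n K) : Prop :=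
  ∃ x : m → K, ∃ y : n → K, x ≠ 0 ∧ y ≠ 0 ∧ ∀ j, x ⬝ᵥ N j *ᵥ y = 0

noncomputable def Matrix.bilinPoly (M : Matrix m n K) : MvPolynomial (m ⊕ n) K :=
  (MvPolynomial.X ∘ Sum.inl) ⬝ᵥ M.map MvPolynomial.C *ᵥ (MvPolynomial.X ∘ Sum.inr)

theorem Matrix.eval₂_bilinPoly {R : Type*} [CommSemiring R] (ψ : K →+* R) (v : m ⊕ n → R)
    (M : Matrix m n K) :
    M.bilinPoly.eval₂ ψ v = (v ∘ Sum.inl) ⬝ᵥ M.map ψ *ᵥ (v ∘ Sum.inr) := by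
  rw [bilinPoly, ← MvPolynomial.coe_eval₂Hom, RingHom.map_dotProduct_mulVec, Matrix.map_map]
  simp [Function.comp_def]

theorem HasNontrivialCommonZero.of_map [IsAlgClosed K] {F : Type*} [Field F] (φ : K →+* F)
    {N : ι → Matrix m n K} (h : HasNontrivialCommonZero fun j ↦ (N j).map φ) :
    HasNontrivialCommonZero N := by
  obtain ⟨x, y, hx, hy, hxy⟩ := h
  obtain ⟨p₀, hp₀⟩ : ∃ p, x p ≠ 0 := Function.ne_iff.mp hx
  obtain ⟨q₀, hq₀⟩ : ∃ q, y q ≠ 0 := Function.ne_iff.mp hy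
  -- normalising `x p₀ = y q₀ = 1` keeps the solution away from zero after descent
  let S := insert (MvPolynomial.X (.inl p₀) - 1) (insert (MvPolynomial.X (.inr q₀) - 1)
    (Set.range fun j ↦ (N j).bilinPoly))
  obtain ⟨z, hz⟩ := MvPolynomial.exists_eval_eq_zero_of_eval₂_eq_zero φ S
    (Sum.elim ((x p₀)⁻¹ • x) ((y q₀)⁻¹ • y)) <| by
      rintro f (rfl | rfl | ⟨j, rfl⟩)
      · simp [hp₀]
      · simp [hq₀]
      · rw [eval₂_bilinPoly, Sum.elim_comp_inl, Sum.elim_comp_inr, smul_dotProduct_mulVec_smul,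
          hxy, mul_zero]
  have hzp₀ : z (.inl p₀) = 1 := by simpa [sub_eq_zero] using hz _ (Set.mem_insert _ _)
  have hzq₀ : z (.inr q₀) = 1 := by
    simpa [sub_eq_zero] using hz _ (Set.mem_insert_of_mem _ (Set.mem_insert _ _))
  refine ⟨z ∘ Sum.inl, z ∘ Sum.inr, Function.ne_iff.mpr ⟨p₀, by simp [hzp₀]⟩,
    Function.ne_iff.mpr ⟨q₀, by simp [hzq₀]⟩, fun j ↦ ?_⟩
  have := hz _ (Set.mem_insert_of_mem _ (Set.mem_insert_of_mem _ ⟨j, rfl⟩))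
  rwa [MvPolynomial.eval, MvPolynomial.coe_eval₂Hom, eval₂_bilinPoly, RingHom.coe_id,
    Matrix.map_id] at this

theorem HasNontrivialCommonZero.of_valuation_lt [IsAlgClosed K] {F : Type*} [Field F]
    [Algebra K F] (O : ValuationSubring F) (hO : (algebraMap K F).range ≤ O.toSubring)
    {N : ι → Matrix m n K} {x : m → F} {y : n → F} (hx : x ≠ 0) (hy : y ≠ 0)
    (h : ∀ j, ∃ p q, O.valuation (x ⬝ᵥ (N j).map (algebraMap K F) *ᵥ y) <
      O.valuation (x p) * O.valuation (y q)) :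
    HasNontrivialCommonZero N := by
  obtain ⟨i, hi, hxi⟩ := O.exists_forall_valuation_le hx
  obtain ⟨k, hk, hyk⟩ := O.exists_forall_valuation_le hy
  let x' (p : m) : O := ⟨(x i)⁻¹ * x p, O.inv_mul_mem_of_valuation_le (hxi p)⟩
  let y' (q : n) : O := ⟨(y k)⁻¹ * y q, O.inv_mul_mem_of_valuation_le (hyk q)⟩
  let ψ : K →+* O := (algebraMap K F).codRestrict O (fun a ↦ hO ⟨a, rfl⟩)
  let res := IsLocalRing.residue O
  have hx'i : x' i = 1 := Subtype.ext (inv_mul_cancel₀ hi)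
  have hy'k : y' k = 1 := Subtype.ext (inv_mul_cancel₀ hk)
  refine .of_map (res.comp ψ) ⟨res ∘ x', res ∘ y', Function.ne_iff.mpr ⟨i, by simp [hx'i]⟩,
    Function.ne_iff.mpr ⟨k, by simp [hy'k]⟩, fun j ↦ ?_⟩
  have hval : ((x' ⬝ᵥ (N j).map ψ *ᵥ y' : O) : F) =
      (x i)⁻¹ * (y k)⁻¹ * (x ⬝ᵥ (N j).map (algebraMap K F) *ᵥ y) := by
    rw [← smul_dotProduct_mulVec_smul]
    exact O.subtype.map_dotProduct_mulVec _ _ _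
  have key : res (x' ⬝ᵥ (N j).map ψ *ᵥ y') = 0 := by
    obtain ⟨p, q, hpq⟩ := h j
    rw [IsLocalRing.residue_eq_zero_iff, ← ValuationSubring.coe_mem_nonunits_iff,
      ValuationSubring.mem_nonunits_iff, hval, map_mul, map_mul, map_inv₀, map_inv₀,
      ← mul_inv, inv_mul_lt_one₀
        (mul_pos (O.valuation.pos_iff.mpr hi) (O.valuation.pos_iff.mpr hk))]
    exact hpq.trans_le (mul_le_mul' (hxi p) (hyk q))
  rwa [RingHom.map_dotProduct_mulVec, Matrix.map_map, ← RingHom.coe_comp] at key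

theorem div_mem_range_of_not_hasNontrivialCommonZero [IsAlgClosed K] {F : Type*} [Field F]
    [Algebra K F] {c : ℕ} {N : Fin (c + 1) → Matrix m n K} (hN : ¬HasNontrivialCommonZero N)
    {x : m → F} {y : n → F} (hx : x ≠ 0) (hy : y ≠ 0)
    (hxy : ∀ j : Fin c, x ⬝ᵥ (N j.succ).map (algebraMap K F) *ᵥ y = 0) {i : m} {q : n}
    (hi : x i ≠ 0) (hq : y q ≠ 0) :
    (x ⬝ᵥ (N 0).map (algebraMap K F) *ᵥ y) / (x i * y q) ∈ (algebraMap K F).range := by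
  by_contra hu
  have hT : Transcendental K ((x ⬝ᵥ (N 0).map (algebraMap K F) *ᵥ y) / (x i * y q)) :=
    fun halg ↦ hu (IsAlgClosed.mem_range_algebraMap_of_isAlgebraic halg)
  obtain ⟨O, hO, hOu⟩ := hT.exists_valuationSubring_mem_nonunits
  have hpos : 0 < O.valuation (x i) * O.valuation (y q) :=
    mul_pos (O.valuation.pos_iff.mpr hi) (O.valuation.pos_iff.mpr hq)
  refine hN (.of_valuation_lt O hO hx hy (Fin.cases ⟨i, q, ?_⟩ fun j ↦ ⟨i, q, ?_⟩))
  · rwa [ValuationSubring.mem_nonunits_iff, map_div₀, map_mul, div_lt_one₀ hpos] at hOu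
  · rwa [hxy j, map_zero]

theorem exists_eq_smul_comp_algebraMap_of_not_hasNontrivialCommonZero [IsAlgClosed K]
    {F : Type*} [Field F] [Algebra K F] {c : ℕ} {N : Fin (c + 1) → Matrix m n K}
    (hN : ¬HasNontrivialCommonZero N) {x : m → F} {y : n → F} (hx : x ≠ 0) (hy : y ≠ 0)
    (hxy : ∀ j : Fin c, x ⬝ᵥ (N j.succ).map (algebraMap K F) *ᵥ y = 0) :
    ∃ μ : F, ∃ η : n → K, y = μ • (algebraMap K F ∘ η) := by
  set B := x ⬝ᵥ (N 0).map (algebraMap K F) *ᵥ y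
  have hB : B ≠ 0 := fun hB ↦ hN (.of_map (algebraMap K F) ⟨x, y, hx, hy, Fin.cases hB hxy⟩)
  obtain ⟨i, hi⟩ : ∃ i, x i ≠ 0 := Function.ne_iff.mp hx
  have (q : n) : ∃ e : K, y q = B / x i * algebraMap K F e := by
    by_cases hq : y q = 0
    · exact ⟨0, by simp [hq]⟩
    obtain ⟨a, ha⟩ := div_mem_range_of_not_hasNontrivialCommonZero hN hx hy hxy hi hq
    have ha : algebraMap K F a = B / (x i * y q) := ha
    refine ⟨a⁻¹, ?_⟩
    rw [map_inv₀, ha]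
    field_simp
  choose η hη using this
  exact ⟨B / x i, η, funext hη⟩

theorem hasNontrivialCommonZero_of_card_lt [Fintype ι] [Nonempty n] (N : ι → Matrix m n K)
    (h : Fintype.card ι < Fintype.card m) : HasNontrivialCommonZero N := by
  let A : Matrix ι m K := Matrix.of fun j ↦ N j *ᵥ 1
  obtain ⟨x, hx, hx0⟩ := Submodule.exists_mem_ne_zero_of_ne_bot
    (LinearMap.ker_ne_bot_of_finrank_lt (f := A.mulVecLin) (by simpa using h))
  refine ⟨x, 1, hx0, one_ne_zero, fun j ↦ ?_⟩
  rw [dotProduct_comm]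
  exact congrFun (LinearMap.mem_ker.mp hx) j

end

universe u

section

variable {m : Type*} [Fintype m]

theorem hasNontrivialCommonZero_succ_of_forall {K : Type u} [Field K] [IsAlgClosed K] {c s : ℕ}
    (ih : ∀ (F : Type u) [Field F] [IsAlgClosed F] (N : Fin c → Matrix m (Fin s) F),
      HasNontrivialCommonZero N)
    (N : Fin (c + 1) → Matrix m (Fin (s + 1)) K) : HasNontrivialCommonZero N := by
  by_contra hN
  let F := AlgebraicClosure (RatFunc K)
  let T : F := algebraMap (RatFunc K) F RatFunc.X
  have hT : Transcendental K T :=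
    (transcendental_algebraMap_iff (algebraMap (RatFunc K) F).injective).mpr
      RatFunc.transcendental_X
  -- `L` parametrises the hyperplane `∑ i, T ^ i * y i = 0`, which contains no nonzero `K`-point
  let L : Matrix (Fin (s + 1)) (Fin s) F := Matrix.of fun i q ↦
    Fin.cases (-T ^ (q + 1 : ℕ)) (fun i' ↦ (1 : Matrix (Fin s) (Fin s) F) i' q) i
  have hwL : (fun i : Fin (s + 1) ↦ T ^ (i : ℕ)) ᵥ* L = 0 := by
    ext q
    simp [L, vecMul, dotProduct, Fin.sum_univ_succ, one_apply, pow_succ]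
  obtain ⟨x, z, hx, hz, hxz⟩ := ih F fun j ↦ (N j.succ).map (algebraMap K F) * L
  have hLz : (fun i : Fin (s + 1) ↦ T ^ (i : ℕ)) ⬝ᵥ L *ᵥ z = 0 := by
    rw [dotProduct_mulVec, hwL, zero_dotProduct]
  have hLz0 : L *ᵥ z ≠ 0 := fun h ↦ hz <| funext fun q ↦ by
    simpa [L, mulVec, dotProduct, one_apply] using congrFun h q.succ
  obtain ⟨μ, η, hy⟩ := exists_eq_smul_comp_algebraMap_of_not_hasNontrivialCommonZero hN hx hLz0
    fun j ↦ by rw [mulVec_mulVec]; exact hxz j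
  have hμ : μ ≠ 0 := by
    rintro rfl
    exact hLz0 (by simpa using hy)
  have hη : η = 0 := hT.eq_zero_of_pow_dotProduct_eq_zero <| by
    simpa [hy, dotProduct_smul, hμ] using hLz
  exact hLz0 (by simp [hy, hη])

theorem HasNontrivialCommonZero.of_add_two_le [Nonempty m] :
    ∀ {s : ℕ} {K : Type u} [Field K] [IsAlgClosed K] {c : ℕ} (N : Fin c → Matrix m (Fin s) K),
      0 < s → c + 2 ≤ Fintype.card m + s → HasNontrivialCommonZero N
  | 0, _, _, _, _, _, hs, _ => absurd hs (lt_irrefl 0)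
  | s + 1, K, _, _, c, N, _, hc => by
    rcases lt_or_ge c (Fintype.card m) with hcm | hcm
    · exact hasNontrivialCommonZero_of_card_lt N (by simpa using hcm)
    obtain ⟨c, rfl⟩ : ∃ c', c = c' + 1 :=
      Nat.exists_eq_add_one.mpr (Fintype.card_pos.trans_le hcm)
    rcases s with _ | s
    · omega
    exact hasNontrivialCommonZero_succ_of_forall
      (fun F _ _ N' ↦ of_add_two_le N' (Nat.succ_pos s) (by omega)) N

end

section

variable {K B V : Type*} [Field K] [AddCommGroup B] [Module K B] [AddCommGroup V] [Module K V]

theorem Submodule.finrank_map_add_finrank_inf_ker {M : Type*} [AddCommGroup M] [Module K M]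
    (W : Submodule K M) [FiniteDimensional K W] (f : M →ₗ[K] V) :
    finrank K (W.map f) + finrank K ↥(W ⊓ LinearMap.ker f) = finrank K W := by
  rw [← (f.domRestrict W).finrank_range_add_finrank_ker, LinearMap.range_domRestrict,
    LinearMap.ker_domRestrict, ← map_comap_subtype,
    ← (equivMapOfInjective _ W.injective_subtype _).finrank_eq]

theorem Submodule.exists_ne_zero_dual_apply_eq_zero [IsAlgClosed K] [FiniteDimensional K B]
    [FiniteDimensional K V] (W : Submodule K (B →ₗ[K] V)) (hB : 0 < finrank K B)
    (hV : 0 < finrank K V) (hW : finrank K W + 2 ≤ finrank K B + finrank K V) :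
    ∃ b : B, b ≠ 0 ∧ ∃ ψ : Module.Dual K V, ψ ≠ 0 ∧ ∀ f ∈ W, ψ (f b) = 0 := by
  let bB := finBasis K B
  let bV := finBasis K V
  let g := finBasis K W
  have : Nonempty (Fin (finrank K V)) := ⟨⟨0, hV⟩⟩
  obtain ⟨y, x, hy, hx, hyx⟩ := HasNontrivialCommonZero.of_add_two_le
    (fun j ↦ LinearMap.toMatrix bB bV (g j)) hB (by simpa [add_comm] using hW)
  let ψ : Module.Dual K V := dotProductBilin K K y ∘ₗ bV.equivFun.toLinearMap
  have hψ (f : B →ₗ[K] V) :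
      ψ (f (bB.equivFun.symm x)) = y ⬝ᵥ LinearMap.toMatrix bB bV f *ᵥ x := by
    have hx : ⇑(bB.repr (bB.equivFun.symm x)) = x := bB.equivFun.apply_symm_apply x
    change y ⬝ᵥ ⇑(bV.repr _) = _
    rw [← LinearMap.toMatrix_mulVec_repr bB bV f, hx]
  refine ⟨bB.equivFun.symm x, bB.equivFun.symm.map_ne_zero_iff.mpr hx, ψ, ?_, fun f hf ↦ ?_⟩
  · obtain ⟨q, hq⟩ : ∃ q, y q ≠ 0 := Function.ne_iff.mp hy
    refine DFunLike.ne_iff.mpr ⟨bV q, ?_⟩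
    simpa [ψ, Finsupp.single_eq_pi_single] using hq
  · have : ψ ∘ₗ LinearMap.applyₗ (bB.equivFun.symm x) ∘ₗ W.subtype = 0 :=
      g.ext fun j ↦ (hψ (g j)).trans (hyx j)
    simpa using LinearMap.congr_fun this ⟨f, hf⟩

theorem Submodule.finrank_add_finrank_le_of_forall_eval_surjective [IsAlgClosed K]
    [FiniteDimensional K B] [FiniteDimensional K V] (W : Submodule K (B →ₗ[K] V))
    (hB : 0 < finrank K B) (hV : 0 < finrank K V)
    (hW : ∀ b : B, b ≠ 0 → ∀ v : V, ∃ f ∈ W, f b = v) :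
    finrank K B + finrank K V ≤ finrank K W + 1 := by
  by_contra! h
  obtain ⟨b, hb, ψ, hψ, hψW⟩ := W.exists_ne_zero_dual_apply_eq_zero hB hV (by omega)
  obtain ⟨v, hv⟩ := DFunLike.ne_iff.mp hψ
  obtain ⟨f, hf, rfl⟩ := hW b hb v
  exact hv (hψW f hf)

end

theorem ker_domRestrict'_eq_vanishOn {k U V : Type*} [Field k] [AddCommGroup U] [Module k U]
    [AddCommGroup V] [Module k V] (B : Submodule k U) :
    LinearMap.ker (LinearMap.domRestrict' (M₂ := V) B) = vanishOn B := by
  ext f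
  simp [vanishOn, LinearMap.ext_iff]

theorem dim_vanishOn_hyperplane_le_general {k U V : Type*} [Field k] [IsAlgClosed k]
    [AddCommGroup U] [Module k U] [AddCommGroup V] [Module k V]
    [FiniteDimensional k U] [FiniteDimensional k V]
    (r s t : ℕ) (hr : 2 ≤ r) (hs : 1 ≤ s)
    (hV : finrank k V = s)
    (W : Submodule k (U →ₗ[k] V)) (hW : finrank k W = t)
    (htrans : ∀ u : U, u ≠ 0 → ∀ v : V, ∃ f ∈ W, f u = v)
    (B : Submodule k U) (hBdim : finrank k B = r - 1) :
    (finrank k ↥(W ⊓ vanishOn B) : ℤ) ≤ (t : ℤ) - r - s + 2 := by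
  have hrank := W.finrank_map_add_finrank_inf_ker (LinearMap.domRestrict' B)
  rw [ker_domRestrict'_eq_vanishOn] at hrank
  have hlow := (W.map (LinearMap.domRestrict' B)).finrank_add_finrank_le_of_forall_eval_surjective
    (by omega) (by omega) fun b hb v ↦ by
      obtain ⟨f, hf, hfb⟩ := htrans b (by simpa using hb) v
      exact ⟨_, Submodule.mem_map_of_mem hf, hfb⟩
  omega

/-- Case `A = 0`, `b = 1` of the technical lemma: if `W ⊆ Hom(U,V)` is a `t`-dimensional
subspace such that for every nonzero `u ∈ U` the evaluation `f ↦ f u` maps `W` onto `V`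
(`dim U = r`, `dim V = s ≥ 1`), then for any nonzero hyperplane `B ⊂ U` the subspace
`{f ∈ W | f|_B = 0}` has dimension at most `t - r - s + 2`. -/
theorem dim_vanishOn_hyperplane_le {k U V : Type*} [Field k] [IsAlgClosed k]
    [AddCommGroup U] [Module k U] [AddCommGroup V] [Module k V]
    [FiniteDimensional k U] [FiniteDimensional k V]
    (r s t : ℕ) (hr : 2 ≤ r) (hs : 1 ≤ s)
    (hU : finrank k U = r) (hV : finrank k V = s)
    (W : Submodule k (U →ₗ[k] V)) (hW : finrank k W = t)
    (htrans : ∀ u : U, u ≠ 0 → ∀ v : V, ∃ f ∈ W, f u = v)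
    (B : Submodule k U) (hB : B ≠ ⊥) (hBdim : finrank k B = r - 1) :
    (finrank k ↥(W ⊓ vanishOn B) : ℤ) ≤ (t : ℤ) - r - s + 2 :=
  dim_vanishOn_hyperplane_le_general r s t hr hs hV W hW htrans B hBdim
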